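/- Let A be an associative unital ℂ-algebra containing parabosons B_k^± (k ∈ Fin m) and parafermions F_α^± (α ∈ Fin n) satisfying the relative parabose (Greenberg–Messiah) mixed relations. For M ∈ Matrix (Fin m) (Fin m) ℂ and P ∈ Matrix (Fin n) (Fin n) ℂ define J(M,P) := (1/2)·Σ_{k,l} M_{kl}·{B_k^+, B_l^−} + (1/2)·Σ_{α,β} P_{αβ}·[F_α^+, F_β^−] ∈ A, and for Q ∈ Matrix (Fin m) (Fin n) ℂ and R ∈ Matrix (Fin n) (Fin m) ℂ define K(Q,R) := (1/2)·Σ_{k,α} ( Q_{kα}·{B_k^+, F_α^−} + R_{αk}·{F_α^+, B_k^−} ) ∈ A. Then for all Q, Q' ∈ Matrix (Fin m) (Fin n) ℂ and R, R' ∈ Matrix (Fin n) (Fin m) ℂ one has {K(Q,R), K(Q',R')} = J(Q·R' + Q'·R, R·Q' + R'·Q). -/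
import Mathlib


open scoped BigOperators

noncomputable section

/-- The ringComm `[x, y] = x * y - y * x`. -/
def ringComm {A : Type*} [Ring A] (x y : A) : A := x * y - y * x

/-- The ringAnticomm `{x, y} = x * y + y * x`. -/
def ringAnticomm {A : Type*} [Ring A] (x y : A) : A := x * y + y * x

/-- A family of parabosons: `B k 1 = B_k^+`, `B k (-1) = B_k^-`, satisfying the
paraboson trilinear relations. -/
def IsParabosonFamily {A : Type*} [Ring A] [Algebra ℂ A] {ι : Type*} [DecidableEq ι]
    (B : ι → ℂ → A) : Prop :=
  ∀ (i j k : ι), ∀ ξ ∈ ({1, -1} : Set ℂ), ∀ η ∈ ({1, -1} : Set ℂ),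
    ∀ ε ∈ ({1, -1} : Set ℂ),
      ringComm (ringAnticomm (B i ξ) (B j η)) (B k ε) =
        ((ε - η) * (if j = k then (1 : ℂ) else 0)) • B i ξ +
          ((ε - ξ) * (if i = k then (1 : ℂ) else 0)) • B j η

/-- A family of parafermions: `F α 1 = F_α^+`, `F α (-1) = F_α^-`, satisfying the
parafermion trilinear relations. -/
def IsParafermionFamily {A : Type*} [Ring A] [Algebra ℂ A] {κ : Type*} [DecidableEq κ]
    (F : κ → ℂ → A) : Prop :=
  ∀ (i j k : κ), ∀ ξ ∈ ({1, -1} : Set ℂ), ∀ η ∈ ({1, -1} : Set ℂ),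
    ∀ ε ∈ ({1, -1} : Set ℂ),
      ringComm (ringComm (F i ξ) (F j η)) (F k ε) =
        ((1 / 2 : ℂ) * (ε - η) ^ 2 * (if j = k then (1 : ℂ) else 0)) • F i ξ -
          ((1 / 2 : ℂ) * (ε - ξ) ^ 2 * (if i = k then (1 : ℂ) else 0)) • F j η

/-- The relative parabose (Greenberg–Messiah) mixed trilinear relations between
a family of parabosons `B` and a family of parafermions `F`. -/
def RelParaboseMixed {A : Type*} [Ring A] [Algebra ℂ A] {ι κ : Type*} [DecidableEq ι] [DecidableEq κ]
    (B : ι → ℂ → A) (F : κ → ℂ → A) : Prop :=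
  ∀ (i j : ι) (α β : κ), ∀ ξ ∈ ({1, -1} : Set ℂ), ∀ η ∈ ({1, -1} : Set ℂ),
    ∀ ε ∈ ({1, -1} : Set ℂ),
      ringComm (ringAnticomm (B i ξ) (B j η)) (F α ε) = 0 ∧
      ringComm (ringComm (F α ξ) (F β η)) (B i ε) = 0 ∧
      ringComm (ringAnticomm (B i ξ) (F α η)) (B j ε) =
        ((ε - ξ) * (if i = j then (1 : ℂ) else 0)) • F α η ∧
      ringAnticomm (ringAnticomm (B i ξ) (F α η)) (F β ε) =
        ((1 / 2 : ℂ) * (ε - η) ^ 2 * (if α = β then (1 : ℂ) else 0)) • B i ξ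

/-- The even-part realization map `J(M,P)`. -/
def Jmap {A : Type*} [Ring A] [Algebra ℂ A] {m n : ℕ}
    (B : Fin m → ℂ → A) (F : Fin n → ℂ → A)
    (M : Matrix (Fin m) (Fin m) ℂ) (P : Matrix (Fin n) (Fin n) ℂ) : A :=
  (1 / 2 : ℂ) • ∑ k, ∑ l, M k l • ringAnticomm (B k 1) (B l (-1)) +
    (1 / 2 : ℂ) • ∑ α, ∑ β, P α β • ringComm (F α 1) (F β (-1))

/-- The odd-part realization map `K(Q,R)`. -/
def Kmap {A : Type*} [Ring A] [Algebra ℂ A] {m n : ℕ}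
    (B : Fin m → ℂ → A) (F : Fin n → ℂ → A)
    (Q : Matrix (Fin m) (Fin n) ℂ) (R : Matrix (Fin n) (Fin m) ℂ) : A :=
  (1 / 2 : ℂ) • ∑ k, ∑ α,
    (Q k α • ringAnticomm (B k 1) (F α (-1)) + R α k • ringAnticomm (F α 1) (B k (-1)))


set_option linter.unusedSectionVars false
section Helpers
variable {A : Type*} [Ring A] [Algebra ℂ A]

lemma ac_comm (x y : A) : ringAnticomm x y = ringAnticomm y x := by
  simp [ringAnticomm]; abel

lemma rc_smul_left (a : ℂ) (x y : A) : ringComm (a • x) y = a • ringComm x y := by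
  simp [ringComm, smul_sub, smul_mul_assoc, mul_smul_comm]

lemma ac_smul_left (a : ℂ) (x y : A) : ringAnticomm (a • x) y = a • ringAnticomm x y := by
  simp [ringAnticomm, smul_add, smul_mul_assoc, mul_smul_comm]

lemma ac_smul_right (a : ℂ) (x y : A) : ringAnticomm x (a • y) = a • ringAnticomm x y := by
  simp [ringAnticomm, smul_add, smul_mul_assoc, mul_smul_comm]

lemma ac_add_left (x y z : A) : ringAnticomm (x + y) z = ringAnticomm x z + ringAnticomm y z := by
  simp only [ringAnticomm, add_mul, mul_add]; abel

lemma ac_add_right (x y z : A) : ringAnticomm x (y + z) = ringAnticomm x y + ringAnticomm x z := by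
  simp only [ringAnticomm, add_mul, mul_add]; abel

lemma ac_sum_left {ι : Type*} (s : Finset ι) (f : ι → A) (y : A) :
    ringAnticomm (∑ i ∈ s, f i) y = ∑ i ∈ s, ringAnticomm (f i) y := by
  simp [ringAnticomm, Finset.sum_mul, Finset.mul_sum, Finset.sum_add_distrib]

lemma ac_sum_right {ι : Type*} (s : Finset ι) (x : A) (g : ι → A) :
    ringAnticomm x (∑ i ∈ s, g i) = ∑ i ∈ s, ringAnticomm x (g i) := by
  simp [ringAnticomm, Finset.sum_mul, Finset.mul_sum, Finset.sum_add_distrib]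

lemma rc_neg_swap (x y : A) : ringComm x y = - ringComm y x := by simp [ringComm]

lemma ac_expand (X P Q : A) :
    ringAnticomm X (ringAnticomm P Q) =
      ringComm (ringComm X P) Q + ringAnticomm (ringAnticomm X Q) P := by
  simp only [ringComm, ringAnticomm]; noncomm_ring

lemma mem_one' : (1:ℂ) ∈ ({1,-1} : Set ℂ) := by simp
lemma mem_neg_one' : (-1:ℂ) ∈ ({1,-1} : Set ℂ) := by simp

section keys
variable {ι κ : Type*} [DecidableEq ι] [DecidableEq κ] (B : ι → ℂ → A) (F : κ → ℂ → A)

lemma keyXX (hBF : RelParaboseMixed B F) (k l : ι) (α β : κ) :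
    ringAnticomm (ringAnticomm (B k 1) (F α (-1))) (ringAnticomm (B l 1) (F β (-1))) = 0 := by
  rw [ac_expand]
  obtain ⟨-, -, h3, -⟩ := hBF k l α β 1 mem_one' (-1) mem_neg_one' 1 mem_one'
  obtain ⟨-, -, -, h4⟩ := hBF k l α β 1 mem_one' (-1) mem_neg_one' (-1) mem_neg_one'
  rw [h3, h4]
  norm_num [ringComm, ringAnticomm]

lemma keyYY (hBF : RelParaboseMixed B F) (k l : ι) (α β : κ) :
    ringAnticomm (ringAnticomm (F α 1) (B k (-1))) (ringAnticomm (F β 1) (B l (-1))) = 0 := by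
  rw [ac_comm (F α 1), ac_comm (F β 1), ac_expand]
  obtain ⟨-, -, h3, -⟩ := hBF k l α β (-1) mem_neg_one' 1 mem_one' (-1) mem_neg_one'
  obtain ⟨-, -, -, h4⟩ := hBF k l α β (-1) mem_neg_one' 1 mem_one' 1 mem_one'
  rw [h3, h4]
  norm_num [ringComm, ringAnticomm]

lemma keyXY (hBF : RelParaboseMixed B F) (k l : ι) (α β : κ) :
    ringAnticomm (ringAnticomm (B k 1) (F α (-1))) (ringAnticomm (F β 1) (B l (-1))) =
      (2 * (if k = l then (1:ℂ) else 0)) • ringComm (F β 1) (F α (-1)) +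
      (2 * (if α = β then (1:ℂ) else 0)) • ringAnticomm (B k 1) (B l (-1)) := by
  rw [ac_comm (F β 1), ac_expand]
  obtain ⟨-, -, h3, -⟩ := hBF k l α β 1 mem_one' (-1) mem_neg_one' (-1) mem_neg_one'
  obtain ⟨-, -, -, h4⟩ := hBF k l α β 1 mem_one' (-1) mem_neg_one' 1 mem_one'
  rw [h3, h4, rc_smul_left, ac_smul_left, rc_neg_swap (F α (-1)) (F β 1)]
  module

lemma keyYX (hBF : RelParaboseMixed B F) (k l : ι) (α β : κ) :
    ringAnticomm (ringAnticomm (F α 1) (B k (-1))) (ringAnticomm (B l 1) (F β (-1))) =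
      (2 * (if k = l then (1:ℂ) else 0)) • ringComm (F α 1) (F β (-1)) +
      (2 * (if α = β then (1:ℂ) else 0)) • ringAnticomm (B l 1) (B k (-1)) := by
  rw [ac_comm (F α 1), ac_expand]
  obtain ⟨-, -, h3, -⟩ := hBF k l α β (-1) mem_neg_one' 1 mem_one' 1 mem_one'
  obtain ⟨-, -, -, h4⟩ := hBF k l α β (-1) mem_neg_one' 1 mem_one' (-1) mem_neg_one'
  rw [h3, h4, rc_smul_left, ac_smul_left, ac_comm (B k (-1)) (B l 1)]
  module

end keys
lemma sum_rot3 {a b c M : Type*} [Fintype a] [Fintype b] [Fintype c] [AddCommMonoid M]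
    (f : a → b → c → M) :
    ∑ x : a, ∑ y : b, ∑ z : c, f x y z = ∑ y : b, ∑ z : c, ∑ x : a, f x y z := by
  rw [Finset.sum_comm]
  exact Finset.sum_congr rfl fun _ _ => Finset.sum_comm

lemma sum_swap23 {a b c M : Type*} [Fintype a] [Fintype b] [Fintype c] [AddCommMonoid M]
    (f : a → b → c → M) :
    ∑ x : a, ∑ y : b, ∑ z : c, f x y z = ∑ x : a, ∑ z : c, ∑ y : b, f x y z :=
  Finset.sum_congr rfl fun _ _ => Finset.sum_comm

end Helpers

theorem anticomm_Kmap_Kmap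
 {A : Type*} [Ring A] [Algebra ℂ A] {m n : ℕ}
    (B : Fin m → ℂ → A) (F : Fin n → ℂ → A)
    (hB : IsParabosonFamily B) (hF : IsParafermionFamily F)
    (hBF : RelParaboseMixed B F)
    (Q Q' : Matrix (Fin m) (Fin n) ℂ) (R R' : Matrix (Fin n) (Fin m) ℂ) :
    ringAnticomm (Kmap B F Q R) (Kmap B F Q' R') =
      Jmap B F (Q * R' + Q' * R) (R * Q' + R' * Q) := by
  unfold Kmap Jmap
  simp only [ac_smul_left, ac_smul_right, ac_sum_left, ac_sum_right, ac_add_left, ac_add_right,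
    keyXX B F hBF, keyYY B F hBF, keyXY B F hBF, keyYX B F hBF]
  simp only [smul_zero, add_zero, zero_add, smul_add, smul_smul, mul_ite, mul_one, mul_zero,
    ite_smul, zero_smul, smul_ite, Finset.sum_ite_irrel, Finset.sum_const_zero, Finset.sum_ite_eq,
    Finset.sum_ite_eq', Finset.mem_univ, if_true, Finset.smul_sum, Finset.sum_add_distrib,
    Matrix.add_apply, Matrix.mul_apply, Finset.sum_smul, add_smul]
  have h1 : ∑ x : Fin m, ∑ x_1 : Fin n, ∑ x_2 : Fin n,
        (1 / 2 * (Q' x x_1 * (1 / 2 * (R x_2 x * 2)))) • ringComm (F x_2 1) (F x_1 (-1)) =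
      ∑ x : Fin n, ∑ x_1 : Fin n, ∑ x_2 : Fin m,
        (1 / 2 * (R x x_2 * Q' x_2 x_1)) • ringComm (F x 1) (F x_1 (-1)) := by
    rw [sum_rot3, Finset.sum_comm]
    exact Finset.sum_congr rfl fun _ _ => Finset.sum_congr rfl fun _ _ =>
      Finset.sum_congr rfl fun _ _ => by module
  have h2 : ∑ x : Fin m, ∑ x_1 : Fin n, ∑ x_2 : Fin m,
        (1 / 2 * (Q' x x_1 * (1 / 2 * (R x_1 x_2 * 2)))) • ringAnticomm (B x 1) (B x_2 (-1)) =
      ∑ x : Fin m, ∑ x_1 : Fin m, ∑ x_2 : Fin n,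
        (1 / 2 * (Q' x x_2 * R x_2 x_1)) • ringAnticomm (B x 1) (B x_1 (-1)) := by
    rw [sum_swap23]
    exact Finset.sum_congr rfl fun _ _ => Finset.sum_congr rfl fun _ _ =>
      Finset.sum_congr rfl fun _ _ => by module
  have h3 : ∑ x : Fin m, ∑ x_1 : Fin n, ∑ x_2 : Fin n,
        (1 / 2 * (R' x_1 x * (1 / 2 * (Q x x_2 * 2)))) • ringComm (F x_1 1) (F x_2 (-1)) =
      ∑ x : Fin n, ∑ x_1 : Fin n, ∑ x_2 : Fin m,
        (1 / 2 * (R' x x_2 * Q x_2 x_1)) • ringComm (F x 1) (F x_1 (-1)) := by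
    rw [sum_rot3]
    exact Finset.sum_congr rfl fun _ _ => Finset.sum_congr rfl fun _ _ =>
      Finset.sum_congr rfl fun _ _ => by module
  have h4 : ∑ x : Fin m, ∑ x_1 : Fin n, ∑ x_2 : Fin m,
        (1 / 2 * (R' x_1 x * (1 / 2 * (Q x_2 x_1 * 2)))) • ringAnticomm (B x_2 1) (B x (-1)) =
      ∑ x : Fin m, ∑ x_1 : Fin m, ∑ x_2 : Fin n,
        (1 / 2 * (Q x x_2 * R' x_2 x_1)) • ringAnticomm (B x 1) (B x_1 (-1)) := by
    rw [sum_rot3, Finset.sum_comm, sum_swap23]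
    exact Finset.sum_congr rfl fun _ _ => Finset.sum_congr rfl fun _ _ =>
      Finset.sum_congr rfl fun _ _ => by module
  rw [h1, h2, h3, h4]
  abel


end
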